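/- arXiv:1301.2069 — 2 statements merged into one kernel-verified Lean document; each statement's English description precedes it below -/
import Mathlib

section
/- Let $n \ge 1$, let $\lambda_1, \dots, \lambda_n$ be strictly positive real numbers with $m = \sum_{i=1}^n \lambda_i$, let $X = (X_{ik})$ be an $n \times n$ complex matrix with trace $1$, and let $K \ge 0$ be a real number such that $K^2 \ge m \sum_{i=1}^n |X_{ii}|^2 \lambda_i^{-1}$ and $K^2 \ge m \sum_{i=1}^n |X_{ii}|^2 \lambda_i$. Then $m \le K^2 \cdot n$. -/
/-!
Since `λ + λ⁻¹ ≥ 2`, averaging the two hypotheses gives `m ∑ᵢ |Xᵢᵢ|² ≤ K²`, while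
Cauchy–Schwarz applied to `1 = ∑ᵢ Xᵢᵢ` gives `1 ≤ n ∑ᵢ |Xᵢᵢ|²`.
-/

open scoped BigOperators

theorem two_le_add_inv_self {α : Type*} [Field α] [LinearOrder α] [IsStrictOrderedRing α]
    {x : α} (hx : 0 < x) : 2 ≤ x + x⁻¹ := by
  have hsq : x + x⁻¹ - 2 = (x - 1) ^ 2 / x := by field_simp; ring
  have : 0 ≤ (x - 1) ^ 2 / x := by positivity
  linarith

theorem two_mul_sum_le_sum_mul_inv_add_sum_mul {ι α : Type*} [Fintype ι] [Field α] [LinearOrder α]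
    [IsStrictOrderedRing α] {w lam : ι → α} (hw : ∀ i, 0 ≤ w i) (hlam : ∀ i, 0 < lam i) :
    2 * ∑ i, w i ≤ ∑ i, w i * (lam i)⁻¹ + ∑ i, w i * lam i := by
  rw [Finset.mul_sum, ← Finset.sum_add_distrib]
  refine Finset.sum_le_sum fun i _ => ?_
  nlinarith [mul_le_mul_of_nonneg_left (two_le_add_inv_self (hlam i)) (hw i)]

theorem Matrix.norm_trace_sq_le_card_mul_sum_norm_diag_sq {ι R : Type*} [Fintype ι]
    [SeminormedAddCommGroup R] (X : Matrix ι ι R) :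
    ‖X.trace‖ ^ 2 ≤ Fintype.card ι * ∑ i, ‖X i i‖ ^ 2 := by
  calc ‖X.trace‖ ^ 2 ≤ (∑ i, ‖X i i‖) ^ 2 := by
        gcongr
        exact norm_sum_le _ _
    _ ≤ Fintype.card ι * ∑ i, ‖X i i‖ ^ 2 := sq_sum_le_card_mul_sum_sq

theorem quantum_dim_le_general (n : ℕ) (lam : Fin n → ℝ)
    (hlam : ∀ i, 0 < lam i) (m : ℝ)
    (X : Matrix (Fin n) (Fin n) ℂ) (hX : X.trace = 1)
    (K : ℝ)
    (h1 : m * ∑ i, ‖X i i‖ ^ 2 * (lam i)⁻¹ ≤ K ^ 2)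
    (h2 : m * ∑ i, ‖X i i‖ ^ 2 * lam i ≤ K ^ 2) :
    m ≤ K ^ 2 * n := by
  rcases le_or_gt m 0 with hm | hm
  · exact hm.trans (by positivity)
  set S := ∑ i, ‖X i i‖ ^ 2
  have hmS : m * S ≤ K ^ 2 := by
    have hAMGM := two_mul_sum_le_sum_mul_inv_add_sum_mul (fun i => sq_nonneg ‖X i i‖) hlam
    nlinarith
  have hS : 1 ≤ n * S := by
    simpa [hX] using X.norm_trace_sq_le_card_mul_sum_norm_diag_sq
  calc m ≤ m * (n * S) := le_mul_of_one_le_right hm.le hS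
    _ = n * (m * S) := by ring
    _ ≤ K ^ 2 * n := by rw [mul_comm]; gcongr

/-- Arithmetic core of the main theorem: if `m = ∑ λ i` with `λ i > 0`,
`X` is an `n × n` complex matrix of trace `1`, and `K ≥ 0` satisfies
`K² ≥ m ∑ᵢ |Xᵢᵢ|² λᵢ⁻¹` and `K² ≥ m ∑ᵢ |Xᵢᵢ|² λᵢ`, then `m ≤ K² n`. -/
theorem quantum_dim_le (n : ℕ) (hn : 1 ≤ n) (lam : Fin n → ℝ)
    (hlam : ∀ i, 0 < lam i) (m : ℝ) (hm : m = ∑ i, lam i)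
    (X : Matrix (Fin n) (Fin n) ℂ) (hX : X.trace = 1)
    (K : ℝ) (hK : 0 ≤ K)
    (h1 : m * ∑ i, ‖X i i‖ ^ 2 * (lam i)⁻¹ ≤ K ^ 2)
    (h2 : m * ∑ i, ‖X i i‖ ^ 2 * lam i ≤ K ^ 2) :
    m ≤ K ^ 2 * n :=
  quantum_dim_le_general n lam hlam m X hX K h1 h2
end

section
/- Let $n \ge 1$, let $\lambda_1, \dots, \lambda_n$ be strictly positive real numbers with $\sum_{i=1}^n \lambda_i = \sum_{i=1}^n \lambda_i^{-1} = m$, let $X = (X_{ik})$ be an $n \times n$ complex matrix with trace $1$, let $K \ge 0$ satisfy $K^2 \ge m \sum_{i=1}^n |X_{ii}|^2 \lambda_i^{-1}$ and $K^2 \ge m \sum_{i=1}^n |X_{ii}|^2 \lambda_i$, and suppose moreover that $m^d \le K^2 n^d$ for every positive integer $d$. Then $\lambda_i = 1$ for every $i$. -/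
/-!
The power estimate `mᵈ ≤ K² nᵈ` for all `d` forces `m ≤ n`: otherwise `K² (n / m)ᵈ → 0` would
eventually drop below `1`. On the other hand `∑ᵢ (λᵢ + λᵢ⁻¹ - 2) = 2 (m - n)` is a sum of the
nonnegative terms `(λᵢ - 1)² / λᵢ`, so `m ≤ n` makes every one of them vanish.
-/

open Filter Topology

theorem add_inv_sub_two_eq_sq_div {x : ℝ} (hx : x ≠ 0) : x + x⁻¹ - 2 = (x - 1) ^ 2 / x := by
  field_simp
  ring

theorem le_of_forall_pow_le_mul_pow {a b C : ℝ} (hb : 0 ≤ b)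
    (h : ∀ d : ℕ, 0 < d → a ^ d ≤ C * b ^ d) : a ≤ b := by
  by_contra! hba
  have ha : 0 < a := hb.trans_lt hba
  have hlim : Tendsto (fun d : ℕ => C * (b / a) ^ d) atTop (𝓝 0) := by
    simpa using (tendsto_pow_atTop_nhds_zero_of_lt_one (div_nonneg hb ha.le)
      ((div_lt_one ha).2 hba)).const_mul C
  obtain ⟨d, hd_pos, hd⟩ :=
    ((eventually_gt_atTop 0).and (hlim.eventually (gt_mem_nhds one_pos))).exists
  rw [div_pow, mul_div_assoc', div_lt_one (pow_pos ha d)] at hd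
  linarith [h d hd_pos]

section SumEqSumInv

variable {ι : Type*} [Fintype ι] {lam : ι → ℝ} {m : ℝ}

theorem sum_add_inv_sub_two_eq (hm : ∑ i, lam i = m) (hm' : ∑ i, (lam i)⁻¹ = m) :
    ∑ i, (lam i + (lam i)⁻¹ - 2) = 2 * (m - Fintype.card ι) := by
  simp only [Finset.sum_sub_distrib, Finset.sum_add_distrib, hm, hm', Finset.sum_const,
    Finset.card_univ, nsmul_eq_mul]
  ring

theorem eq_one_of_sum_eq_sum_inv_of_le_card (hlam : ∀ i, 0 < lam i)
    (hm : ∑ i, lam i = m) (hm' : ∑ i, (lam i)⁻¹ = m) (hle : m ≤ Fintype.card ι) (i : ι) :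
    lam i = 1 := by
  have hterm : ∀ j, lam j + (lam j)⁻¹ - 2 = (lam j - 1) ^ 2 / lam j := fun j =>
    add_inv_sub_two_eq_sq_div (hlam j).ne'
  have hnonneg : ∀ j ∈ Finset.univ, 0 ≤ lam j + (lam j)⁻¹ - 2 := fun j _ => by
    rw [hterm j]
    exact div_nonneg (sq_nonneg _) (hlam j).le
  have hzero : ∑ j, (lam j + (lam j)⁻¹ - 2) = 0 :=
    le_antisymm (by linarith [sum_add_inv_sub_two_eq hm hm']) (Finset.sum_nonneg hnonneg)
  have hi := (Finset.sum_eq_zero_iff_of_nonneg hnonneg).1 hzero i (Finset.mem_univ i)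
  rw [hterm i, div_eq_zero_iff, sq_eq_zero_iff, sub_eq_zero] at hi
  exact hi.resolve_right (hlam i).ne'

end SumEqSumInv

theorem kac_from_biflat_estimates_general (n : ℕ) (lam : Fin n → ℝ)
    (hlam : ∀ i, 0 < lam i) (m : ℝ)
    (hm : ∑ i, lam i = m) (hm' : ∑ i, (lam i)⁻¹ = m)
    (K : ℝ)
    (hpow : ∀ d : ℕ, 0 < d → m ^ d ≤ K ^ 2 * (n : ℝ) ^ d) :
    ∀ i, lam i = 1 := by
  have hle : m ≤ n := le_of_forall_pow_le_mul_pow n.cast_nonneg hpow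
  exact eq_one_of_sum_eq_sum_inv_of_le_card hlam hm hm' (by simpa using hle)

/-- Complete arithmetic skeleton of the main theorem: suppose `λ i > 0`,
`∑ λ i = ∑ (λ i)⁻¹ = m`, `X` is an `n × n` complex matrix of trace `1`,
`K ≥ 0` satisfies `K² ≥ m ∑ᵢ |Xᵢᵢ|² λᵢ⁻¹`, `K² ≥ m ∑ᵢ |Xᵢᵢ|² λᵢ`, and
`m^d ≤ K² n^d` for every positive integer `d`. Then every `λ i = 1`. -/
theorem kac_from_biflat_estimates (n : ℕ) (hn : 1 ≤ n) (lam : Fin n → ℝ)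
    (hlam : ∀ i, 0 < lam i) (m : ℝ)
    (hm : ∑ i, lam i = m) (hm' : ∑ i, (lam i)⁻¹ = m)
    (X : Matrix (Fin n) (Fin n) ℂ) (hX : X.trace = 1)
    (K : ℝ) (hK : 0 ≤ K)
    (h1 : m * ∑ i, ‖X i i‖ ^ 2 * (lam i)⁻¹ ≤ K ^ 2)
    (h2 : m * ∑ i, ‖X i i‖ ^ 2 * lam i ≤ K ^ 2)
    (hpow : ∀ d : ℕ, 0 < d → m ^ d ≤ K ^ 2 * (n : ℝ) ^ d) :
    ∀ i, lam i = 1 :=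
  kac_from_biflat_estimates_general n lam hlam m hm hm' K hpow
end
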